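/- Define ω̄ : ℝ → ℝ by ω̄(x) = α₀ + α₅·cos(πx) + Σ_{j=1}^{4} [α_j·cos(jπx/5) + β_j·sin(jπx/5)], where α₀ = 9/2, α₁ = α₂ = α₃ = α₄ = −1, α₅ = −1/2, β₁ = −√(5 + 2√5), β₂ = −√(1 + 2/√5), β₃ = −√(5 − 2√5), β₄ = −√(1 − 2/√5). Then ω̄ is periodic with period 10, and ω̄(n) = n mod 10 for every integer n (equivalently, ω̄(i) = i for i = 0, 1, …, 9). -/
import Mathlib

/-- The trigonometric interpolation ω̄ of Eq. (3:Omega) of the paper, for a tape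
alphabet of 10 symbols. -/
noncomputable def omegaBar (x : ℝ) : ℝ :=
  9/2 + (-1/2) * Real.cos (Real.pi * x)
    + ((-1) * Real.cos (1 * Real.pi * x / 5) + (-Real.sqrt (5 + 2 * Real.sqrt 5)) * Real.sin (1 * Real.pi * x / 5))
    + ((-1) * Real.cos (2 * Real.pi * x / 5) + (-Real.sqrt (1 + 2 / Real.sqrt 5)) * Real.sin (2 * Real.pi * x / 5))
    + ((-1) * Real.cos (3 * Real.pi * x / 5) + (-Real.sqrt (5 - 2 * Real.sqrt 5)) * Real.sin (3 * Real.pi * x / 5))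
    + ((-1) * Real.cos (4 * Real.pi * x / 5) + (-Real.sqrt (1 - 2 / Real.sqrt 5)) * Real.sin (4 * Real.pi * x / 5))

private lemma sq5 : Real.sqrt 5 ^ 2 = 5 := Real.sq_sqrt (by norm_num)

private lemma sq5nn : (0:ℝ) ≤ Real.sqrt 5 := Real.sqrt_nonneg 5

private lemma sq5lt : Real.sqrt 5 < 5/2 := by
  nlinarith [sq5, sq5nn]

private lemma sq5gt : 2 < Real.sqrt 5 := by
  nlinarith [sq5, sq5nn]

private lemma c1v : Real.cos (Real.pi/5) = (1 + Real.sqrt 5)/4 := Real.cos_pi_div_five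

private lemma c2v : Real.cos (2*Real.pi/5) = (Real.sqrt 5 - 1)/4 := by
  rw [show (2:ℝ)*Real.pi/5 = 2*(Real.pi/5) by ring, Real.cos_two_mul, c1v]
  linear_combination sq5/8

private lemma s1sq : Real.sin (Real.pi/5) ^ 2 = (10 - 2*Real.sqrt 5)/16 := by
  have h := Real.sin_sq_add_cos_sq (Real.pi/5)
  rw [c1v] at h
  linear_combination h - sq5/16

private lemma s2sq : Real.sin (2*Real.pi/5) ^ 2 = (10 + 2*Real.sqrt 5)/16 := by
  have h := Real.sin_sq_add_cos_sq (2*Real.pi/5)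
  rw [c2v] at h
  linear_combination h - sq5/16

private lemma s1nn : (0:ℝ) ≤ Real.sin (Real.pi/5) := by
  apply Real.sin_nonneg_of_nonneg_of_le_pi
  · positivity
  · nlinarith [Real.pi_pos]

private lemma s2nn : (0:ℝ) ≤ Real.sin (2*Real.pi/5) := by
  apply Real.sin_nonneg_of_nonneg_of_le_pi
  · positivity
  · nlinarith [Real.pi_pos]

private lemma s1v : Real.sin (Real.pi/5) = Real.sqrt ((10 - 2*Real.sqrt 5)/16) := by
  rw [← s1sq, Real.sqrt_sq s1nn]

private lemma s2v : Real.sin (2*Real.pi/5) = Real.sqrt ((10 + 2*Real.sqrt 5)/16) := by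
  rw [← s2sq, Real.sqrt_sq s2nn]

private lemma prodAux {a b c : ℝ} (ha : 0 ≤ a) (hc : 0 ≤ c) (h : a * b = c^2) :
    Real.sqrt a * Real.sqrt b = c := by
  rw [← Real.sqrt_mul ha, h, Real.sqrt_sq hc]

private lemma P11 : Real.sqrt (5 + 2*Real.sqrt 5) * Real.sin (Real.pi/5) = (5 + Real.sqrt 5)/4 := by
  rw [s1v]
  exact prodAux (by nlinarith [sq5nn]) (by nlinarith [sq5nn]) (by linear_combination (-5/16)*sq5)

private lemma P12 : Real.sqrt (5 + 2*Real.sqrt 5) * Real.sin (2*Real.pi/5) = (5 + 3*Real.sqrt 5)/4 := by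
  rw [s2v]
  exact prodAux (by nlinarith [sq5nn]) (by nlinarith [sq5nn]) (by linear_combination (-5/16)*sq5)

private lemma b2v : (1:ℝ) + 2/Real.sqrt 5 = (5 + 2*Real.sqrt 5)/5 := by
  have h0 : Real.sqrt 5 ≠ 0 := by nlinarith [sq5gt]
  field_simp
  linear_combination (-2)*sq5

private lemma P21 : Real.sqrt (1 + 2/Real.sqrt 5) * Real.sin (Real.pi/5) = (1 + Real.sqrt 5)/4 := by
  rw [s1v, b2v]
  exact prodAux (by nlinarith [sq5nn]) (by nlinarith [sq5nn]) (by linear_combination (-9/80)*sq5)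

private lemma P22 : Real.sqrt (1 + 2/Real.sqrt 5) * Real.sin (2*Real.pi/5) = (3 + Real.sqrt 5)/4 := by
  rw [s2v, b2v]
  exact prodAux (by nlinarith [sq5nn]) (by nlinarith [sq5nn]) (by linear_combination (-1/80)*sq5)

private lemma P31 : Real.sqrt (5 - 2*Real.sqrt 5) * Real.sin (Real.pi/5) = (3*Real.sqrt 5 - 5)/4 := by
  rw [s1v]
  exact prodAux (by nlinarith [sq5lt]) (by nlinarith [sq5gt]) (by linear_combination (-5/16)*sq5)

private lemma P32 : Real.sqrt (5 - 2*Real.sqrt 5) * Real.sin (2*Real.pi/5) = (5 - Real.sqrt 5)/4 := by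
  rw [s2v]
  exact prodAux (by nlinarith [sq5lt]) (by nlinarith [sq5lt]) (by linear_combination (-5/16)*sq5)

private lemma b4v : (1:ℝ) - 2/Real.sqrt 5 = (5 - 2*Real.sqrt 5)/5 := by
  have h0 : Real.sqrt 5 ≠ 0 := by nlinarith [sq5gt]
  field_simp
  linear_combination 2*sq5

private lemma P41 : Real.sqrt (1 - 2/Real.sqrt 5) * Real.sin (Real.pi/5) = (3 - Real.sqrt 5)/4 := by
  rw [s1v, b4v]
  exact prodAux (by nlinarith [sq5lt]) (by nlinarith [sq5lt]) (by linear_combination (-1/80)*sq5)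

private lemma P42 : Real.sqrt (1 - 2/Real.sqrt 5) * Real.sin (2*Real.pi/5) = (Real.sqrt 5 - 1)/4 := by
  rw [s2v, b4v]
  exact prodAux (by nlinarith [sq5lt]) (by nlinarith [sq5gt]) (by linear_combination (-9/80)*sq5)

private lemma v0 : omegaBar 0 = 0 := by
  unfold omegaBar
  rw [(show Real.pi * 0 = (0:ℝ) by ring),
      (show 1 * Real.pi * 0 / 5 = (0:ℝ) by ring),
      (show 2 * Real.pi * 0 / 5 = (0:ℝ) by ring),
      (show 3 * Real.pi * 0 / 5 = (0:ℝ) by ring),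
      (show 4 * Real.pi * 0 / 5 = (0:ℝ) by ring)]
  simp only [Real.cos_add_two_pi, Real.sin_add_two_pi, Real.cos_add_pi, Real.sin_add_pi,
    Real.cos_pi_sub, Real.sin_pi_sub, Real.cos_neg, Real.sin_neg, Real.cos_zero, Real.sin_zero,
    Real.cos_pi, c1v, c2v]
  norm_num

private lemma v1 : omegaBar 1 = 1 := by
  unfold omegaBar
  rw [(show Real.pi * 1 = Real.pi by ring),
      (show 1 * Real.pi * 1 / 5 = Real.pi/5 by ring),
      (show 2 * Real.pi * 1 / 5 = 2*Real.pi/5 by ring),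
      (show 3 * Real.pi * 1 / 5 = Real.pi - 2*Real.pi/5 by ring),
      (show 4 * Real.pi * 1 / 5 = Real.pi - Real.pi/5 by ring)]
  simp only [Real.cos_add_two_pi, Real.sin_add_two_pi, Real.cos_add_pi, Real.sin_add_pi,
    Real.cos_pi_sub, Real.sin_pi_sub, Real.cos_neg, Real.sin_neg, Real.cos_zero, Real.sin_zero,
    Real.cos_pi, c1v, c2v]
  linear_combination (-1)*P11 + (-1)*P22 + (-1)*P32 + (-1)*P41

private lemma v2 : omegaBar 2 = 2 := by
  unfold omegaBar
  rw [(show Real.pi * 2 = (0:ℝ) + 2*Real.pi by ring),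
      (show 1 * Real.pi * 2 / 5 = 2*Real.pi/5 by ring),
      (show 2 * Real.pi * 2 / 5 = Real.pi - Real.pi/5 by ring),
      (show 3 * Real.pi * 2 / 5 = Real.pi/5 + Real.pi by ring),
      (show 4 * Real.pi * 2 / 5 = -(2*Real.pi/5) + 2*Real.pi by ring)]
  simp only [Real.cos_add_two_pi, Real.sin_add_two_pi, Real.cos_add_pi, Real.sin_add_pi,
    Real.cos_pi_sub, Real.sin_pi_sub, Real.cos_neg, Real.sin_neg, Real.cos_zero, Real.sin_zero,
    Real.cos_pi, c1v, c2v]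
  linear_combination (-1)*P12 + (-1)*P21 + P31 + P42

private lemma v3 : omegaBar 3 = 3 := by
  unfold omegaBar
  rw [(show Real.pi * 3 = Real.pi + 2*Real.pi by ring),
      (show 1 * Real.pi * 3 / 5 = Real.pi - 2*Real.pi/5 by ring),
      (show 2 * Real.pi * 3 / 5 = Real.pi/5 + Real.pi by ring),
      (show 3 * Real.pi * 3 / 5 = -(Real.pi/5) + 2*Real.pi by ring),
      (show 4 * Real.pi * 3 / 5 = 2*Real.pi/5 + 2*Real.pi by ring)]
  simp only [Real.cos_add_two_pi, Real.sin_add_two_pi, Real.cos_add_pi, Real.sin_add_pi,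
    Real.cos_pi_sub, Real.sin_pi_sub, Real.cos_neg, Real.sin_neg, Real.cos_zero, Real.sin_zero,
    Real.cos_pi, c1v, c2v]
  linear_combination (-1)*P12 + P21 + P31 + (-1)*P42

private lemma v4 : omegaBar 4 = 4 := by
  unfold omegaBar
  rw [(show Real.pi * 4 = (0:ℝ) + 2*Real.pi + 2*Real.pi by ring),
      (show 1 * Real.pi * 4 / 5 = Real.pi - Real.pi/5 by ring),
      (show 2 * Real.pi * 4 / 5 = -(2*Real.pi/5) + 2*Real.pi by ring),
      (show 3 * Real.pi * 4 / 5 = 2*Real.pi/5 + 2*Real.pi by ring),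
      (show 4 * Real.pi * 4 / 5 = Real.pi/5 + Real.pi + 2*Real.pi by ring)]
  simp only [Real.cos_add_two_pi, Real.sin_add_two_pi, Real.cos_add_pi, Real.sin_add_pi,
    Real.cos_pi_sub, Real.sin_pi_sub, Real.cos_neg, Real.sin_neg, Real.cos_zero, Real.sin_zero,
    Real.cos_pi, c1v, c2v]
  linear_combination (-1)*P11 + P22 + (-1)*P32 + P41

private lemma v5 : omegaBar 5 = 5 := by
  unfold omegaBar
  rw [(show Real.pi * 5 = Real.pi + 2*Real.pi + 2*Real.pi by ring),
      (show 1 * Real.pi * 5 / 5 = Real.pi by ring),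
      (show 2 * Real.pi * 5 / 5 = (0:ℝ) + 2*Real.pi by ring),
      (show 3 * Real.pi * 5 / 5 = Real.pi + 2*Real.pi by ring),
      (show 4 * Real.pi * 5 / 5 = (0:ℝ) + 2*Real.pi + 2*Real.pi by ring)]
  simp only [Real.cos_add_two_pi, Real.sin_add_two_pi, Real.cos_add_pi, Real.sin_add_pi,
    Real.cos_pi_sub, Real.sin_pi_sub, Real.cos_neg, Real.sin_neg, Real.cos_zero, Real.sin_zero,
    Real.cos_pi, c1v, c2v]
  norm_num

private lemma v6 : omegaBar 6 = 6 := by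
  unfold omegaBar
  rw [(show Real.pi * 6 = (0:ℝ) + 2*Real.pi + 2*Real.pi + 2*Real.pi by ring),
      (show 1 * Real.pi * 6 / 5 = Real.pi/5 + Real.pi by ring),
      (show 2 * Real.pi * 6 / 5 = 2*Real.pi/5 + 2*Real.pi by ring),
      (show 3 * Real.pi * 6 / 5 = -(2*Real.pi/5) + 2*Real.pi + 2*Real.pi by ring),
      (show 4 * Real.pi * 6 / 5 = Real.pi - Real.pi/5 + 2*Real.pi + 2*Real.pi by ring)]
  simp only [Real.cos_add_two_pi, Real.sin_add_two_pi, Real.cos_add_pi, Real.sin_add_pi,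
    Real.cos_pi_sub, Real.sin_pi_sub, Real.cos_neg, Real.sin_neg, Real.cos_zero, Real.sin_zero,
    Real.cos_pi, c1v, c2v]
  linear_combination P11 + (-1)*P22 + P32 + (-1)*P41

private lemma v7 : omegaBar 7 = 7 := by
  unfold omegaBar
  rw [(show Real.pi * 7 = Real.pi + 2*Real.pi + 2*Real.pi + 2*Real.pi by ring),
      (show 1 * Real.pi * 7 / 5 = 2*Real.pi/5 + Real.pi by ring),
      (show 2 * Real.pi * 7 / 5 = Real.pi - Real.pi/5 + 2*Real.pi by ring),
      (show 3 * Real.pi * 7 / 5 = Real.pi/5 + 2*Real.pi + 2*Real.pi by ring),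
      (show 4 * Real.pi * 7 / 5 = -(2*Real.pi/5) + 2*Real.pi + 2*Real.pi + 2*Real.pi by ring)]
  simp only [Real.cos_add_two_pi, Real.sin_add_two_pi, Real.cos_add_pi, Real.sin_add_pi,
    Real.cos_pi_sub, Real.sin_pi_sub, Real.cos_neg, Real.sin_neg, Real.cos_zero, Real.sin_zero,
    Real.cos_pi, c1v, c2v]
  linear_combination P12 + (-1)*P21 + (-1)*P31 + P42

private lemma v8 : omegaBar 8 = 8 := by
  unfold omegaBar
  rw [(show Real.pi * 8 = (0:ℝ) + 2*Real.pi + 2*Real.pi + 2*Real.pi + 2*Real.pi by ring),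
      (show 1 * Real.pi * 8 / 5 = -(2*Real.pi/5) + 2*Real.pi by ring),
      (show 2 * Real.pi * 8 / 5 = Real.pi/5 + Real.pi + 2*Real.pi by ring),
      (show 3 * Real.pi * 8 / 5 = Real.pi - Real.pi/5 + 2*Real.pi + 2*Real.pi by ring),
      (show 4 * Real.pi * 8 / 5 = 2*Real.pi/5 + 2*Real.pi + 2*Real.pi + 2*Real.pi by ring)]
  simp only [Real.cos_add_two_pi, Real.sin_add_two_pi, Real.cos_add_pi, Real.sin_add_pi,
    Real.cos_pi_sub, Real.sin_pi_sub, Real.cos_neg, Real.sin_neg, Real.cos_zero, Real.sin_zero,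
    Real.cos_pi, c1v, c2v]
  linear_combination P12 + P21 + (-1)*P31 + (-1)*P42

private lemma v9 : omegaBar 9 = 9 := by
  unfold omegaBar
  rw [(show Real.pi * 9 = Real.pi + 2*Real.pi + 2*Real.pi + 2*Real.pi + 2*Real.pi by ring),
      (show 1 * Real.pi * 9 / 5 = -(Real.pi/5) + 2*Real.pi by ring),
      (show 2 * Real.pi * 9 / 5 = -(2*Real.pi/5) + 2*Real.pi + 2*Real.pi by ring),
      (show 3 * Real.pi * 9 / 5 = 2*Real.pi/5 + Real.pi + 2*Real.pi + 2*Real.pi by ring),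
      (show 4 * Real.pi * 9 / 5 = Real.pi/5 + Real.pi + 2*Real.pi + 2*Real.pi + 2*Real.pi by ring)]
  simp only [Real.cos_add_two_pi, Real.sin_add_two_pi, Real.cos_add_pi, Real.sin_add_pi,
    Real.cos_pi_sub, Real.sin_pi_sub, Real.cos_neg, Real.sin_neg, Real.cos_zero, Real.sin_zero,
    Real.cos_pi, c1v, c2v]
  linear_combination P11 + P22 + P32 + P41

private lemma omegaBar_periodic : Function.Periodic omegaBar 10 := by
  intro x
  unfold omegaBar
  rw [show Real.pi * (x + 10) = Real.pi * x + 2*Real.pi + 2*Real.pi + 2*Real.pi + 2*Real.pi + 2*Real.pi by ring,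
      show 1 * Real.pi * (x + 10) / 5 = 1 * Real.pi * x / 5 + 2*Real.pi by ring,
      show 2 * Real.pi * (x + 10) / 5 = 2 * Real.pi * x / 5 + 2*Real.pi + 2*Real.pi by ring,
      show 3 * Real.pi * (x + 10) / 5 = 3 * Real.pi * x / 5 + 2*Real.pi + 2*Real.pi + 2*Real.pi by ring,
      show 4 * Real.pi * (x + 10) / 5 = 4 * Real.pi * x / 5 + 2*Real.pi + 2*Real.pi + 2*Real.pi + 2*Real.pi by ring]
  simp only [Real.cos_add_two_pi, Real.sin_add_two_pi]

/-- ω̄ is periodic of period 10 and extends n ↦ n mod 10 from the integers to ℝ. -/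
theorem omegaBar_mod_ten :
    (∀ x : ℝ, omegaBar (x + 10) = omegaBar x) ∧
    (∀ n : ℤ, omegaBar (n : ℝ) = ((n % 10 : ℤ) : ℝ)) := by
  refine ⟨omegaBar_periodic, fun n => ?_⟩
  have hred : omegaBar ((n : ℝ)) = omegaBar (((n % 10 : ℤ) : ℝ)) := by
    have h := omegaBar_periodic.sub_int_mul_eq (x := (n : ℝ)) (n / 10)
    rw [show (n : ℝ) - (n / 10 : ℤ) * 10 = ((n % 10 : ℤ) : ℝ) by
      have h2 : ((10 * (n / 10) + n % 10 : ℤ) : ℝ) = (n : ℝ) := by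
        exact_mod_cast congrArg (fun z : ℤ => (z : ℝ)) (Int.mul_ediv_add_emod n 10)
      push_cast at h2
      linarith] at h
    exact h.symm
  rw [hred]
  have hr0 : 0 ≤ n % 10 := Int.emod_nonneg n (by norm_num)
  have hr1 : n % 10 < 10 := Int.emod_lt_of_pos n (by norm_num)
  set r := n % 10 with hr
  clear_value r
  interval_cases r <;> norm_num [v0, v1, v2, v3, v4, v5, v6, v7, v8, v9]
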